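/- arXiv:1103.4729 — 13 statements merged into one kernel-verified Lean document; each statement's English description precedes it below -/
import Mathlib

section
/- Let G be a finite group and let p be a prime such that O_p(G) = 1. If G has a unique minimal normal subgroup, then there exists a finite-dimensional simple F_p[G]-module that is faithful for G. -/
/-!
Take a faithful finite-dimensional representation `V` of least dimension; the regular
representation shows that one exists. If `V` had a proper nonzero invariant subspace `W`, let
`K₁` and `K₂` be the kernels of the actions on `W` and on `V/W`. On `K₁ ⊓ K₂` every `ρ g - 1`
squares to zero, so `ρ g ^ p = 1` in characteristic `p`, and faithfulness makes `K₁ ⊓ K₂` a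
normal `p`-subgroup, hence trivial. Every nontrivial normal subgroup contains the unique minimal
normal subgroup, so `K₁` or `K₂` is trivial, and `W` or `V/W` is a smaller faithful
representation.
-/

open Module

universe u

theorem one_add_pow_of_mul_self_eq_zero {R : Type*} [Semiring R] {a : R} (ha : a * a = 0)
    (n : ℕ) : (1 + a) ^ n = 1 + n • a := by
  induction n with
  | zero => simp
  | succ n ih =>
    rw [pow_succ, ih, add_mul, one_mul, mul_add, mul_one, smul_mul_assoc, ha, smul_zero,
      add_zero, succ_nsmul', add_assoc]

namespace Subgroup

variable {G : Type*} [Group G]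

def IsMinimalNormal (N : Subgroup G) : Prop :=
  N ≠ ⊥ ∧ N.Normal ∧ ∀ M : Subgroup G, M.Normal → M ≤ N → M = ⊥ ∨ M = N

theorem exists_isMinimalNormal_le [Finite G] {K : Subgroup G} (hK : K.Normal) (hK₀ : K ≠ ⊥) :
    ∃ N ≤ K, N.IsMinimalNormal := by
  obtain ⟨N, ⟨hN₀, hN, hNK⟩, hNmin⟩ :=
    (Set.toFinite {M : Subgroup G | M ≠ ⊥ ∧ M.Normal ∧ M ≤ K}).exists_minimal ⟨K, hK₀, hK, le_rfl⟩
  refine ⟨N, hNK, hN₀, hN, fun M hM hMN => or_iff_not_imp_left.2 fun hM₀ => ?_⟩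
  exact le_antisymm hMN (hNmin ⟨hM₀, hM, hMN.trans hNK⟩ hMN)

theorem eq_bot_or_eq_bot_of_inf_eq_bot [Finite G] (hmin : ∃! N : Subgroup G, N.IsMinimalNormal)
    {K L : Subgroup G} (hK : K.Normal) (hL : L.Normal) (hKL : K ⊓ L = ⊥) : K = ⊥ ∨ L = ⊥ := by
  obtain ⟨N, hN, hN_unique⟩ := hmin
  have le_of_ne_bot {K : Subgroup G} (hK : K.Normal) (hK₀ : K ≠ ⊥) : N ≤ K := by
    obtain ⟨M, hMK, hM⟩ := exists_isMinimalNormal_le hK hK₀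
    exact hN_unique M hM ▸ hMK
  by_contra! h
  exact hN.1 (le_bot_iff.1 (hKL ▸ le_inf (le_of_ne_bot hK h.1) (le_of_ne_bot hL h.2)))

end Subgroup

namespace Representation

section Kernels

variable {k G V : Type*} [CommRing k] [Group G] [AddCommGroup V] [Module k V]
  (ρ : Representation k G V) {W : Submodule k V} (hW : ∀ g, W ≤ W.comap (ρ g))

theorem pow_mem_ker_of_mem_ker_subrepresentation_inf_ker_quotient (p : ℕ) [CharP k p] {g : G}
    (hg : g ∈ (ρ.subrepresentation W hW).ker ⊓ (ρ.quotient W hW).ker) : g ^ p ∈ ρ.ker := by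
  have fix_W (w : V) (hw : w ∈ W) : ρ g w = w :=
    congrArg Subtype.val (LinearMap.congr_fun hg.1 ⟨w, hw⟩)
  have sub_mem (v : V) : ρ g v - v ∈ W :=
    (Submodule.Quotient.eq W).1 (LinearMap.congr_fun hg.2 (Submodule.Quotient.mk v))
  have sq_zero : (ρ g - 1) * (ρ g - 1) = 0 := by
    ext v
    simp [fix_W _ (sub_mem v)]
  rw [MonoidHom.mem_ker, map_pow, ← add_sub_cancel (1 : Module.End k V) (ρ g),
    one_add_pow_of_mul_self_eq_zero sq_zero, ← Nat.cast_smul_eq_nsmul k, CharP.cast_eq_zero,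
    zero_smul, add_zero]

theorem isPGroup_ker_subrepresentation_inf_ker_quotient (p : ℕ) [CharP k p] (hρ : ρ.ker = ⊥) :
    IsPGroup p ↥((ρ.subrepresentation W hW).ker ⊓ (ρ.quotient W hW).ker) := fun g =>
  ⟨1, Subtype.ext (by
    simpa [hρ] using pow_mem_ker_of_mem_ker_subrepresentation_inf_ker_quotient ρ hW p g.2)⟩

theorem ker_subrepresentation_eq_bot_or_ker_quotient_eq_bot [Finite G] {p : ℕ} [CharP k p]
    (hOp : ∀ N : Subgroup G, N.Normal → IsPGroup p N → N = ⊥)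
    (hmin : ∃! N : Subgroup G, N.IsMinimalNormal) (hρ : ρ.ker = ⊥) :
    (ρ.subrepresentation W hW).ker = ⊥ ∨ (ρ.quotient W hW).ker = ⊥ :=
  Subgroup.eq_bot_or_eq_bot_of_inf_eq_bot hmin inferInstance inferInstance
    (hOp _ inferInstance (isPGroup_ker_subrepresentation_inf_ker_quotient ρ hW p hρ))

end Kernels

theorem leftRegular_injective (k G : Type*) [Semiring k] [Nontrivial k] [Monoid G] :
    Function.Injective (leftRegular k G) := fun g h hgh =>
  (MonoidAlgebra.single_left_inj one_ne_zero).1 (by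
    simpa [ofMulAction_single] using LinearMap.congr_fun hgh (MonoidAlgebra.single 1 (1 : k)))

variable {k G : Type*} [Field k] [Group G] [Finite G]

theorem exists_simple_of_ker_eq_bot {p : ℕ} [CharP k p]
    (hOp : ∀ N : Subgroup G, N.Normal → IsPGroup p N → N = ⊥)
    (hmin : ∃! N : Subgroup G, N.IsMinimalNormal) {V : Type u} [AddCommGroup V] [Module k V]
    [FiniteDimensional k V] [Nontrivial V] (ρ : Representation k G V) (hρ : ρ.ker = ⊥) :
    ∃ (V' : Type u) (_ : AddCommGroup V') (_ : Module k V') (ρ' : Representation k G V'),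
      FiniteDimensional k V' ∧ Nontrivial V' ∧
      (∀ W : Submodule k V', (∀ g : G, ∀ v ∈ W, ρ' g v ∈ W) → W = ⊥ ∨ W = ⊤) ∧ ρ'.ker = ⊥ := by
  induction hn : finrank k V using Nat.strong_induction_on generalizing V with
  | _ n ih =>
  by_cases hsimple : ∀ W : Submodule k V, (∀ g : G, ∀ v ∈ W, ρ g v ∈ W) → W = ⊥ ∨ W = ⊤
  · exact ⟨V, _, _, ρ, inferInstance, inferInstance, hsimple, hρ⟩
  push Not at hsimple
  obtain ⟨W, hW, hW₀, hW₁⟩ := hsimple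
  rcases ker_subrepresentation_eq_bot_or_ker_quotient_eq_bot ρ hW hOp hmin hρ with hsub | hquot
  · have : Nontrivial W := Submodule.nontrivial_iff_ne_bot.2 hW₀
    exact ih _ (hn ▸ Submodule.finrank_lt hW₁) _ hsub rfl
  · have : Nontrivial (V ⧸ W) := Submodule.Quotient.nontrivial_iff.2 hW₁
    have hW_pos : finrank k W ≠ 0 := fun h => hW₀ (Submodule.finrank_eq_zero.1 h)
    have := W.finrank_quotient_add_finrank
    exact ih _ (by omega) _ hquot rfl

theorem exists_finiteDimensional_ker_eq_bot (k : Type) (G : Type*) [Field k] [Group G]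
    [Finite G] :
    ∃ (V : Type) (_ : AddCommGroup V) (_ : Module k V) (ρ : Representation k G V),
      FiniteDimensional k V ∧ Nontrivial V ∧ ρ.ker = ⊥ := by
  let e := (finBasis k (MonoidAlgebra k G)).equivFun
  refine ⟨_, _, _, (e.conjRingEquiv.toMulEquiv : Module.End k _ →* Module.End k _).comp
    (leftRegular k G), inferInstance, e.symm.toEquiv.nontrivial, ?_⟩
  exact (MonoidHom.ker_eq_bot_iff _).2
    (e.conjRingEquiv.injective.comp (leftRegular_injective k G))

end Representation

/-- If `G` is a finite group, `p` a prime with `O_p(G) = 1`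
(i.e. every normal `p`-subgroup is trivial), and `G` has a unique minimal
normal subgroup, then there exists a finite-dimensional simple
`𝔽_p[G]`-module which is faithful for `G`. -/
theorem exists_faithful_simple_module
    (G : Type*) [Group G] [Finite G] (p : ℕ) [Fact p.Prime]
    (hOp : ∀ N : Subgroup G, N.Normal → IsPGroup p N → N = ⊥)
    (hmin : ∃! N : Subgroup G, N ≠ ⊥ ∧ N.Normal ∧
      ∀ M : Subgroup G, M.Normal → M ≤ N → M = ⊥ ∨ M = N) :
    ∃ (V : Type) (_ : AddCommGroup V) (_ : Module (ZMod p) V)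
      (ρ : Representation (ZMod p) G V),
      Module.Finite (ZMod p) V ∧ Nontrivial V ∧
      -- simplicity: the only `G`-invariant submodules are `⊥` and `⊤`
      (∀ W : Submodule (ZMod p) V, (∀ g : G, ∀ v ∈ W, ρ g v ∈ W) →
        W = ⊥ ∨ W = ⊤) ∧
      -- faithfulness
      (∀ g : G, ρ g = 1 → g = 1) := by
  obtain ⟨V, _, _, ρ, _, _, hρ⟩ := Representation.exists_finiteDimensional_ker_eq_bot (ZMod p) G
  obtain ⟨V', _, _, ρ', hV', hV'₀, hsimple, hρ'⟩ :=
    Representation.exists_simple_of_ker_eq_bot hOp hmin ρ hρ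
  exact ⟨V', _, _, ρ', hV', hV'₀, hsimple, (Subgroup.eq_bot_iff_forall _).1 hρ'⟩
end

section
/- Let G be a finite group and L a normal subgroup of G contained in the Frattini subgroup Φ(G). If G/L has a normal Hall π-subgroup, then G has a normal Hall π-subgroup. -/
/-!
Induct on `|G|`. As `L ≤ Φ(G)` is nilpotent, a nontrivial `L` contains an abelian `p`-subgroup
`A ≠ 1` normal in `G`; since `L/A ≤ Φ(G/A)`, induction gives a normal Hall `π`-subgroup `H/A` of
`G/A`. If `p ∈ π`, then `H` is a normal Hall `π`-subgroup of `G`. Otherwise Schur–Zassenhaus gives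
a complement `P` of `A` in `H`; complements of the abelian group `A` are `A`-conjugate, so the
Frattini argument gives `G = A · N_G(P)`, and `A ≤ Φ(G)` forces `N_G(P) = G`.
-/

/-- A Hall `π`-subgroup: its order is a `π`-number and its index is a `π'`-number. -/
def IsHallSubgroup {G : Type*} [Group G] (π : Set ℕ) (H : Subgroup G) : Prop :=
  (∀ q : ℕ, q.Prime → q ∣ Nat.card H → q ∈ π) ∧
  (∀ q : ℕ, q.Prime → q ∣ H.index → q ∉ π)

open Subgroup MulAction

def IsPiNumber (π : Set ℕ) (n : ℕ) : Prop :=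
  ∀ q : ℕ, q.Prime → q ∣ n → q ∈ π

namespace IsPiNumber

variable {π : Set ℕ} {m n : ℕ}

theorem mul (hm : IsPiNumber π m) (hn : IsPiNumber π n) : IsPiNumber π (m * n) :=
  fun q hq hdvd => (hq.dvd_mul.mp hdvd).elim (hm q hq) (hn q hq)

theorem coprime (hm : IsPiNumber π m) (hn : IsPiNumber πᶜ n) : m.Coprime n :=
  Nat.coprime_of_dvd fun q hq hqm hqn => hn q hq hqn (hm q hq hqm)

end IsPiNumber

theorem IsPGroup.isPiNumber_card {G : Type*} [Group G] [Finite G] {p : ℕ} {π : Set ℕ}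
    (hp : p.Prime) (hG : IsPGroup p G) (hpπ : p ∈ π) : IsPiNumber π (Nat.card G) := by
  have := Fact.mk hp
  obtain ⟨k, hk⟩ := hG.exists_card_eq
  intro q hq hdvd
  rw [hk] at hdvd
  rwa [(Nat.prime_dvd_prime_iff_eq hq hp).mp (hq.dvd_of_dvd_pow hdvd)]

theorem isHallSubgroup_iff {G : Type*} [Group G] {π : Set ℕ} {H : Subgroup G} :
    IsHallSubgroup π H ↔ IsPiNumber π (Nat.card H) ∧ IsPiNumber πᶜ H.index :=
  Iff.rfl

def HasNormalHallSubgroup (π : Set ℕ) (G : Type*) [Group G] : Prop :=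
  ∃ H : Subgroup G, H.Normal ∧ IsHallSubgroup π H

theorem IsHallSubgroup.map_mulEquiv {G G' : Type*} [Group G] [Group G'] {π : Set ℕ}
    {H : Subgroup G} (hH : IsHallSubgroup π H) (e : G ≃* G') :
    IsHallSubgroup π (H.map (e : G →* G')) := by
  rw [isHallSubgroup_iff, card_map_of_injective e.injective, index_map_equiv]
  exact hH

theorem HasNormalHallSubgroup.of_mulEquiv {G G' : Type*} [Group G] [Group G'] {π : Set ℕ}
    (h : HasNormalHallSubgroup π G) (e : G ≃* G') : HasNormalHallSubgroup π G' :=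
  let ⟨H, hn, hH⟩ := h
  ⟨H.map (e : G →* G'), hn.map _ e.surjective, IsHallSubgroup.map_mulEquiv hH e⟩

theorem IsHallSubgroup.comap_mk' {G : Type*} [Group G] {π : Set ℕ} {A : Subgroup G} [A.Normal]
    (hA : IsPiNumber π (Nat.card A)) {H : Subgroup (G ⧸ A)} (hH : IsHallSubgroup π H) :
    IsHallSubgroup π (H.comap (QuotientGroup.mk' A)) := by
  have hcard : Nat.card (H.comap (QuotientGroup.mk' A)) = Nat.card A * Nat.card H :=
    QuotientGroup.card_preimage_mk A H
  rw [isHallSubgroup_iff, hcard, index_comap_of_surjective _ (QuotientGroup.mk'_surjective A)]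
  exact ⟨hA.mul hH.1, hH.2⟩

theorem IsHallSubgroup.map_subtype_of_isComplement' {G : Type*} [Group G] {π : Set ℕ}
    {K : Subgroup G} {A C : Subgroup K} (hAC : A.IsComplement' C)
    (hA : IsPiNumber πᶜ (Nat.card A)) (hAi : IsPiNumber π A.index)
    (hK : IsPiNumber πᶜ K.index) : IsHallSubgroup π (C.map K.subtype) := by
  rw [isHallSubgroup_iff, card_subtype, index_map_subtype, ← hAC.symm.index_eq_card,
    hAC.index_eq_card]
  exact ⟨hAi, hA.mul hK⟩

namespace Subgroup

theorem IsComplement'.map_mulEquiv {G G' : Type*} [Group G] [Group G'] [Finite G]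
    {H K : Subgroup G} (h : H.IsComplement' K) (e : G ≃* G') :
    (H.map (e : G →* G')).IsComplement' (K.map (e : G →* G')) := by
  have : Finite G' := Finite.of_equiv G e.toEquiv
  rw [isComplement'_iff_card_mul_and_disjoint, card_map_of_injective e.injective,
    card_map_of_injective e.injective, ← Nat.card_congr e.toEquiv]
  exact ⟨h.card_mul_card, (disjoint_map_orderIso_iff e.mapSubgroup).mpr h.disjoint⟩

section AbelianComplements

variable {K : Type*} [Group K] [Finite K] {A C : Subgroup K} [A.Normal] [IsMulCommutative A]

noncomputable def IsComplement'.quotientDiff (h : A.IsComplement' C) : A.QuotientDiff :=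
  Quotient.mk'' ⟨C, h.symm⟩

theorem IsComplement'.le_stabilizer_quotientDiff (h : A.IsComplement' C) :
    C ≤ stabilizer K h.quotientDiff := by
  intro c hc
  -- `c` acts on transversals by right multiplication with `c⁻¹`, which fixes `C` setwise.
  show Quotient.mk'' _ = Quotient.mk'' _
  congr 1
  ext x
  refine ⟨?_, fun hx => ⟨x * c, C.mul_mem hx hc, by simp⟩⟩
  rintro ⟨y, hy, rfl⟩
  exact C.mul_mem hy (C.inv_mem hc)

theorem IsComplement'.stabilizer_quotientDiff (hA : (Nat.card A).Coprime A.index)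
    (h : A.IsComplement' C) : stabilizer K h.quotientDiff = C := by
  have hstab : A.IsComplement' (stabilizer K h.quotientDiff) :=
    isComplement'_stabilizer_of_coprime hA
  refine (eq_of_le_of_card_ge h.le_stabilizer_quotientDiff ?_).symm
  rw [← hstab.symm.index_eq_card, ← h.symm.index_eq_card]

theorem IsComplement'.exists_map_conj_eq (hA : (Nat.card A).Coprime A.index) {C' : Subgroup K}
    (h : A.IsComplement' C) (h' : A.IsComplement' C') :
    ∃ a ∈ A, C' = C.map (MulAut.conj a : K →* K) := by
  obtain ⟨a, ha⟩ := exists_smul_eq hA h.quotientDiff h'.quotientDiff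
  refine ⟨a, a.2, ?_⟩
  rw [← h.stabilizer_quotientDiff hA, ← h'.stabilizer_quotientDiff hA, ← ha,
    Submonoid.smul_def, stabilizer_smul_eq_stabilizer_map_conj, MulEquiv.toMonoidHom_eq_coe]

end AbelianComplements

variable {G : Type*} [Group G]

-- Frattini argument: `G = N · N_G(H)`, and `N ≤ Φ(G)` can be dropped from a generating set.
theorem normal_of_forall_exists_map_conj_eq [IsCoatomic (Subgroup G)] {N H : Subgroup G}
    (hN : N ≤ frattini G)
    (h : ∀ g : G, ∃ n ∈ N, H.map (MulAut.conj g : G →* G) = H.map (MulAut.conj n : G →* G)) :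
    H.Normal := by
  rw [← normalizer_eq_top_iff]
  refine frattini_nongenerating (eq_top_iff.mpr fun g _ => ?_)
  obtain ⟨n, hn, hg⟩ := h g
  have hnorm : n⁻¹ * g ∈ normalizer H := by
    have hcomp (a b : G) : (MulAut.conj (a * b) : G →* G) =
        (MulAut.conj a : G →* G).comp (MulAut.conj b) := by
      ext; simp [mul_assoc]
    rw [mem_normalizer_iff_map_conj_eq, hcomp, ← map_map, hg, map_map, ← hcomp, inv_mul_cancel,
      map_one]
    exact map_id H
  simpa [sup_comm] using mul_mem_sup (hN hn) hnorm

theorem exists_normal_isPGroup_isMulCommutative_le [Finite G] (N : Subgroup G) [N.Normal]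
    [Group.IsNilpotent N] (hN : N ≠ ⊥) :
    ∃ p : ℕ, p.Prime ∧ ∃ A : Subgroup G, A.Normal ∧ IsMulCommutative A ∧
      IsPGroup p A ∧ A ≤ N ∧ A ≠ ⊥ := by
  obtain ⟨p, hp, hpN⟩ := Nat.exists_prime_and_dvd ((one_lt_card_iff_ne_bot N).mpr hN).ne'
  have := Fact.mk hp
  obtain ⟨Q⟩ : Nonempty (Sylow p N) := inferInstance
  have : (Q : Subgroup N).Characteristic :=
    Sylow.characteristic_of_normal Q (Sylow.normal_of_normalizerCondition
      Group.normalizerCondition_of_isNilpotent Q)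
  let QG := (Q : Subgroup N).map N.subtype
  have hQG : IsPGroup p QG := Q.2.map N.subtype
  have : Nontrivial QG := (nontrivial_iff_ne_bot QG).mpr
    ((map_eq_bot_iff_of_injective _ N.subtype_injective).not.mpr (Q.ne_bot_of_dvd_card hpN))
  refine ⟨p, hp, (center QG).map QG.subtype, inferInstance, inferInstance,
    (hQG.to_subgroup _).map _, (map_subtype_le _).trans (map_subtype_le _), ?_⟩
  exact (map_eq_bot_iff_of_injective _ QG.subtype_injective).not.mpr hQG.bot_lt_center.ne'

variable {K : Subgroup G} [K.Normal]

theorem map_subtype_map_conj (C : Subgroup K) (g : G) :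
    (C.map K.subtype).map (MulAut.conj g : G →* G) =
      (C.map ((MulAut.conjNormal g : MulAut K) : K →* K)).map K.subtype := by
  rw [map_map, map_map]
  rfl

theorem map_conjNormal_subgroupOf (A : Subgroup G) [A.Normal] (g : G) :
    (A.subgroupOf K).map ((MulAut.conjNormal g : MulAut K) : K →* K) = A.subgroupOf K := by
  ext x
  rw [← MulEquiv.toMonoidHom_eq_coe, mem_map_equiv, mem_subgroupOf, mem_subgroupOf,
    MulAut.conjNormal_symm_apply, mul_assoc, Normal.mem_comm_iff inferInstance,
    mul_inv_cancel_right]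

theorem IsComplement'.map_subtype_normal [Finite G] {A : Subgroup G} [A.Normal]
    [IsMulCommutative A] (hA : A ≤ frattini G)
    (hcop : (Nat.card (A.subgroupOf K)).Coprime (A.subgroupOf K).index) {C : Subgroup K}
    (hAC : (A.subgroupOf K).IsComplement' C) : (C.map K.subtype).Normal := by
  refine normal_of_forall_exists_map_conj_eq hA fun g => ?_
  have hC' := hAC.map_mulEquiv (MulAut.conjNormal g)
  rw [map_conjNormal_subgroupOf] at hC'
  obtain ⟨a, ha, hCa⟩ := hAC.exists_map_conj_eq hcop hC'
  refine ⟨a, mem_subgroupOf.mp ha, ?_⟩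
  rw [map_subtype_map_conj, map_subtype_map_conj, MulAut.conjNormal_val, hCa]

end Subgroup

section Quotient

variable {G : Type*} [Group G] [Finite G] {π : Set ℕ} {A : Subgroup G} [A.Normal]

theorem HasNormalHallSubgroup.of_quotient_of_isPiNumber_compl [IsMulCommutative A]
    (hAΦ : A ≤ frattini G) (hA : IsPiNumber πᶜ (Nat.card A))
    (h : HasNormalHallSubgroup π (G ⧸ A)) : HasNormalHallSubgroup π G := by
  obtain ⟨H, hHn, hH⟩ := h
  rw [isHallSubgroup_iff] at hH
  set K := H.comap (QuotientGroup.mk' A)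
  have : K.Normal := hHn.comap _
  have hAK : A ≤ K := by simpa using ker_le_comap (QuotientGroup.mk' A) H
  have hA'card : Nat.card (A.subgroupOf K) = Nat.card A :=
    Nat.card_congr (subgroupOfEquivOfLe hAK).toEquiv
  have hA'index : (A.subgroupOf K).index = Nat.card H := by
    have hK : Nat.card K = Nat.card A * Nat.card H := QuotientGroup.card_preimage_mk A H
    rw [← card_mul_index (A.subgroupOf K), hA'card] at hK
    exact Nat.eq_of_mul_eq_mul_left Nat.card_pos hK
  have hcop : (Nat.card (A.subgroupOf K)).Coprime (A.subgroupOf K).index := by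
    rw [hA'card, hA'index]
    exact (hH.1.coprime hA).symm
  obtain ⟨C, hC⟩ := exists_right_complement'_of_coprime hcop
  refine ⟨C.map K.subtype, hC.map_subtype_normal hAΦ hcop, ?_⟩
  refine IsHallSubgroup.map_subtype_of_isComplement' hC (hA'card ▸ hA) (hA'index ▸ hH.1) ?_
  rw [index_comap_of_surjective _ (QuotientGroup.mk'_surjective A)]
  exact hH.2

theorem HasNormalHallSubgroup.of_quotient_of_isPGroup [IsMulCommutative A] {p : ℕ}
    (hp : p.Prime) (hAp : IsPGroup p A) (hAΦ : A ≤ frattini G)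
    (h : HasNormalHallSubgroup π (G ⧸ A)) : HasNormalHallSubgroup π G := by
  by_cases hpπ : p ∈ π
  · obtain ⟨H, hHn, hH⟩ := h
    exact ⟨_, hHn.comap _, hH.comap_mk' (hAp.isPiNumber_card hp hpπ)⟩
  · exact .of_quotient_of_isPiNumber_compl hAΦ (hAp.isPiNumber_card hp hpπ) h

end Quotient

/-- If `L ⊴ G`, `L ≤ Φ(G)` and `G/L` has a normal Hall
`π`-subgroup, then so does `G`. -/
theorem normal_hall_of_quotient_frattini
    (G : Type*) [Group G] [Finite G] (π : Set ℕ) (L : Subgroup G) [L.Normal]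
    (hL : L ≤ frattini G)
    (h : ∃ H : Subgroup (G ⧸ L), H.Normal ∧ IsHallSubgroup π H) :
    ∃ H : Subgroup G, H.Normal ∧ IsHallSubgroup π H := by
  induction hn : Nat.card G using Nat.strong_induction_on generalizing G with
  | _ n ih =>
  rcases eq_or_ne L ⊥ with rfl | hL₀
  · exact HasNormalHallSubgroup.of_mulEquiv h QuotientGroup.quotientBot
  have := frattini_nilpotent (G := G)
  have : Group.IsNilpotent L := (Group.isNilpotent_congr (subgroupOfEquivOfLe hL)).mp inferInstance
  obtain ⟨p, hp, A, hAn, hAc, hAp, hAL, hA₀⟩ := L.exists_normal_isPGroup_isMulCommutative_le hL₀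
  have hcard : Nat.card (G ⧸ A) < n := by
    rw [← hn, card_eq_card_quotient_mul_card_subgroup A]
    exact lt_mul_of_one_lt_right Nat.card_pos ((one_lt_card_iff_ne_bot A).mpr hA₀)
  have hLA : L.map (QuotientGroup.mk' A) ≤ frattini (G ⧸ A) := map_le_iff_le_comap.mpr
    (hL.trans (frattini_le_comap_frattini_of_surjective (QuotientGroup.mk'_surjective A)))
  have hquot := ih _ hcard (G ⧸ A) (L.map (QuotientGroup.mk' A)) hLA
    (HasNormalHallSubgroup.of_mulEquiv h (QuotientGroup.quotientQuotientEquivQuotient A L hAL).symm)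
    rfl
  exact HasNormalHallSubgroup.of_quotient_of_isPGroup hp hAp (hAL.trans hL) hquot
end

section
/- Let p ≠ q be primes dividing the order of a finite group G, and let P be a Sylow p-subgroup of G. If every maximal subgroup of P has a q-closed supplement in G, then G is q-closed. -/
open Pointwise
/-- A finite group is `q`-closed if it has a normal Sylow `q`-subgroup. -/
def IsQClosed (q : ℕ) (H : Type*) [Group H] : Prop :=
  ∃ Q : Sylow q H, (Q : Subgroup H).Normal

/-!
If `V * T = G` and `T` has a normal Sylow `q`-subgroup `Q`, then `|G : T|` divides `|V|`, so for
a `q'`-group `V` the subgroup `Q` is Sylow in `G`; as `T` normalizes `Q`, the conjugation action of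
`V` on the Sylow `q`-subgroups of `G` is transitive. Hence every maximal subgroup of `P` acts
transitively on them. If `P` did not normalize some Sylow `Q`, a maximal subgroup `W` of `P`
containing `N_P(Q)` would be transitive with the same stabilizer as `P`, forcing `W = P`. So `P`
normalizes every Sylow `q`-subgroup, and since `P ≠ 1` one of its transitive maximal subgroups
fixes `Q`: it is the only Sylow `q`-subgroup.
-/

namespace MulAction

variable {G X : Type*} [Group G] [MulAction G X]

theorem isPretransitive_subgroup_of_mul_eq_univ [IsPretransitive G X] {V T : Subgroup G}
    (hVT : (V : Set G) * (T : Set G) = Set.univ) {x : X} (hT : T ≤ stabilizer G x) :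
    IsPretransitive V X := by
  refine (isPretransitive_iff_base x).mpr fun y => ?_
  obtain ⟨g, rfl⟩ := exists_smul_eq G x y
  obtain ⟨v, hv, t, ht, rfl⟩ := Set.mem_mul.mp (hVT ▸ Set.mem_univ g)
  exact ⟨⟨v, hv⟩, by rw [Subgroup.smul_def, mul_smul, mem_stabilizer_iff.mp (hT ht)]⟩

theorem le_of_isPretransitive_of_inf_stabilizer_le {H K : Subgroup G} [IsPretransitive H X]
    (hHK : H ≤ K) (x : X) (hK : K ⊓ stabilizer G x ≤ H) : K ≤ H := by
  intro k hk
  obtain ⟨h, hh⟩ := exists_smul_eq H (k • x) x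
  have hhk : (h : G) * k ∈ K ⊓ stabilizer G x :=
    Subgroup.mem_inf.mpr ⟨mul_mem (hHK h.2) hk, by rwa [mem_stabilizer_iff, mul_smul]⟩
  simpa using mul_mem (inv_mem h.2) (hK hhk)

theorem subsingleton_of_isPretransitive_of_le_stabilizer {H : Subgroup G} [IsPretransitive H X]
    {x : X} (hH : H ≤ stabilizer G x) : Subsingleton X := by
  have hfix : ∀ y : X, y = x := fun y => by
    obtain ⟨h, rfl⟩ := exists_smul_eq H x y
    exact mem_stabilizer_iff.mp (hH h.2)
  exact ⟨fun y z => (hfix y).trans (hfix z).symm⟩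

end MulAction

open MulAction

namespace Subgroup

variable {G : Type*} [Group G]

theorem index_dvd_card_of_mul_eq_univ {V T : Subgroup G}
    (hVT : (V : Set G) * (T : Set G) = Set.univ) : T.index ∣ Nat.card V := by
  have : IsPretransitive V (G ⧸ T) :=
    isPretransitive_subgroup_of_mul_eq_univ hVT (stabilizer_quotient T).ge
  rw [index_eq_card, ← index_stabilizer_of_transitive V ((1 : G) : G ⧸ T)]
  exact index_dvd_card _

end Subgroup

theorem IsPGroup.not_dvd_card_of_ne {G : Type*} [Group G] [Finite G] {p q : ℕ} [Fact p.Prime]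
    (hq : q.Prime) (hpq : p ≠ q) (hG : IsPGroup p G) : ¬ q ∣ Nat.card G := by
  obtain ⟨n, hn⟩ := IsPGroup.iff_card.mp hG
  rw [hn]
  exact fun hdvd => hpq ((Nat.prime_dvd_prime_iff_eq hq Fact.out).mp (hq.dvd_of_dvd_pow hdvd)).symm

section QClosed

variable {G : Type*} [Group G] [Finite G] {q : ℕ} [Fact q.Prime]

theorem IsQClosed.exists_sylow_le_normalizer {T : Subgroup G} (hT : IsQClosed q T)
    (hq : ¬ q ∣ T.index) : ∃ Q : Sylow q G, T ≤ Subgroup.normalizer (Q : Set G) := by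
  obtain ⟨Qt, hQt⟩ := hT
  have hindex : ¬ q ∣ ((Qt : Subgroup T).map T.subtype).index := by
    rw [Subgroup.index_map_subtype]
    exact Nat.Prime.not_dvd_mul Fact.out Qt.not_dvd_index hq
  refine ⟨(Qt.isPGroup'.map T.subtype).toSylow hindex, ?_⟩
  have := Subgroup.le_normalizer_map (H := (Qt : Subgroup T)) T.subtype
  rwa [Subgroup.normalizer_eq_top, ← MonoidHom.range_eq_map, Subgroup.range_subtype] at this

theorem isPretransitive_sylow_of_mul_eq_univ {V T : Subgroup G} (hV : ¬ q ∣ Nat.card V)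
    (hT : IsQClosed q T) (hVT : (V : Set G) * (T : Set G) = Set.univ) :
    IsPretransitive V (Sylow q G) := by
  obtain ⟨Q, hTQ⟩ := hT.exists_sylow_le_normalizer
    fun hdvd => hV (hdvd.trans (Subgroup.index_dvd_card_of_mul_eq_univ hVT))
  exact isPretransitive_subgroup_of_mul_eq_univ hVT (x := Q) (Q.stabilizer_eq_normalizer ▸ hTQ)

end QClosed

theorem qClosed_of_maximal_sylow_subgroups_have_qClosed_supplements_general
    (G : Type*) [Group G] [Finite G] (p q : ℕ) (hp : p.Prime) (hq : q.Prime)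
    (hpq : p ≠ q) (hpd : p ∣ Nat.card G)
    (P : Sylow p G)
    (h : ∀ V : Subgroup G, V < (P : Subgroup G) →
      (∀ W : Subgroup G, V < W → W ≤ (P : Subgroup G) → W = (P : Subgroup G)) →
      ∃ T : Subgroup G, IsQClosed q T ∧ (V : Set G) * (T : Set G) = Set.univ) :
    IsQClosed q G := by
  have : Fact p.Prime := ⟨hp⟩
  have : Fact q.Prime := ⟨hq⟩
  have htrans : ∀ W : Subgroup G, W ⋖ P → IsPretransitive W (Sylow q G) := fun W hW => by
    obtain ⟨T, hT, hWT⟩ :=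
      h W hW.lt fun B hWB hBP => (hW.eq_or_eq hWB.le hBP).resolve_left hWB.ne'
    exact isPretransitive_sylow_of_mul_eq_univ
      ((P.isPGroup'.to_le hW.le).not_dvd_card_of_ne hq hpq) hT hWT
  obtain ⟨Q⟩ : Nonempty (Sylow q G) := inferInstance
  have hPQ : (P : Subgroup G) ≤ stabilizer G Q := by
    by_contra hPQ
    obtain ⟨W, hW, hWP⟩ := exists_le_covBy_of_lt (inf_lt_left.mpr hPQ)
    have := htrans W hWP
    exact hWP.lt.not_ge (le_of_isPretransitive_of_inf_stabilizer_le hWP.le Q hW)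
  obtain ⟨W, -, hWP⟩ := exists_le_covBy_of_lt (bot_lt_iff_ne_bot.mpr (P.ne_bot_of_dvd_card hpd))
  have := htrans W hWP
  have := subsingleton_of_isPretransitive_of_le_stabilizer (hWP.le.trans hPQ)
  exact ⟨Q, Q.normal_of_subsingleton⟩

/-- Let `p ≠ q` be primes dividing `|G|` and `P` a Sylow
`p`-subgroup of `G`.  If every maximal subgroup of `P` has a `q`-closed
supplement in `G`, then `G` is `q`-closed. -/
theorem qClosed_of_maximal_sylow_subgroups_have_qClosed_supplements
    (G : Type*) [Group G] [Finite G] (p q : ℕ) (hp : p.Prime) (hq : q.Prime)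
    (hpq : p ≠ q) (hpd : p ∣ Nat.card G) (hqd : q ∣ Nat.card G)
    (P : Sylow p G)
    (h : ∀ V : Subgroup G, V < (P : Subgroup G) →
      (∀ W : Subgroup G, V < W → W ≤ (P : Subgroup G) → W = (P : Subgroup G)) →
      ∃ T : Subgroup G, IsQClosed q T ∧ (V : Set G) * (T : Set G) = Set.univ) :
    IsQClosed q G :=
  qClosed_of_maximal_sylow_subgroups_have_qClosed_supplements_general G p q hp hq hpq hpd P h
end

section
/- Let A and B be proper subgroups of a finite group G such that G = AB. Then for all x in G: A^x · B = G, and G ≠ A · A^x. -/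
/-!
Write `x = a b` with `a ∈ A`, `b ∈ B`. Conjugation by `a` fixes `A`, so `A^x = A^b`, and
`A^b B = b⁻¹ (A B) = G`. If instead `A A^x = G`, then `x = a x⁻¹ a' x` for some `a, a' ∈ A`,
which forces `x ∈ A`; hence `A^x = A` and `G = A A = A`, contradicting `A ≠ G`.
-/

open Pointwise

namespace Subgroup

variable {G : Type*} [Group G] {A B : Subgroup G}

theorem conj_smul_mul_eq_univ_of_mem (hAB : (A : Set G) * (B : Set G) = Set.univ) {b : G}
    (hb : b ∈ B) : ((MulAut.conj b • A : Subgroup G) : Set G) * (B : Set G) = Set.univ := by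
  refine Set.eq_univ_of_forall fun y => ?_
  obtain ⟨a, ha, b', hb', hab'⟩ := Set.mem_mul.mp (hAB ▸ Set.mem_univ (b⁻¹ * y))
  refine Set.mem_mul.mpr
    ⟨b * a * b⁻¹, smul_mem_pointwise_smul a (MulAut.conj b) A ha, b * b', B.mul_mem hb hb', ?_⟩
  calc b * a * b⁻¹ * (b * b') = b * (a * b') := by group
    _ = y := by rw [hab', mul_inv_cancel_left]

theorem conj_smul_mul_eq_univ (hAB : (A : Set G) * (B : Set G) = Set.univ) (g : G) :
    ((MulAut.conj g • A : Subgroup G) : Set G) * (B : Set G) = Set.univ := by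
  obtain ⟨a, ha, b, hb, hab⟩ := Set.mem_mul.mp (hAB ▸ Set.mem_univ g⁻¹)
  have hg : g = b⁻¹ * a⁻¹ := by rw [← inv_inv g, ← hab]; group
  rw [hg, map_mul, mul_smul, conj_smul_eq_self_of_mem (A.inv_mem ha)]
  exact conj_smul_mul_eq_univ_of_mem hAB (B.inv_mem hb)

theorem mem_of_mul_conj_smul_eq_univ {h : G}
    (hA : (A : Set G) * ((MulAut.conj h • A : Subgroup G) : Set G) = Set.univ) : h ∈ A := by
  obtain ⟨a, ha, c, hc, hac⟩ := Set.mem_mul.mp (hA ▸ Set.mem_univ h⁻¹)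
  obtain ⟨a', ha', rfl⟩ := (mem_smul_pointwise_iff_exists c (MulAut.conj h) A).mp hc
  simp only [MulAut.smul_def, MulAut.conj_apply] at hac
  have hcancel : a * h * a' = 1 :=
    calc a * h * a' = a * (h * a' * h⁻¹) * h := by group
      _ = 1 := by rw [hac, inv_mul_cancel]
  have hh : h = a⁻¹ * a'⁻¹ :=
    calc h = a⁻¹ * (a * h * a') * a'⁻¹ := by group
      _ = a⁻¹ * a'⁻¹ := by rw [hcancel, mul_one]
  rw [hh]
  exact A.mul_mem (A.inv_mem ha) (A.inv_mem ha')

theorem eq_top_of_mul_conj_smul_eq_univ {h : G}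
    (hA : (A : Set G) * ((MulAut.conj h • A : Subgroup G) : Set G) = Set.univ) : A = ⊤ := by
  rw [conj_smul_eq_self_of_mem (mem_of_mul_conj_smul_eq_univ hA), coe_mul_coe] at hA
  exact coe_eq_univ.mp hA

end Subgroup

theorem conj_factorization_general
    (G : Type*) [Group G] (A B : Subgroup G)
    (hA : A ≠ ⊤)
    (hAB : (A : Set G) * (B : Set G) = Set.univ) (x : G) :
    ((MulAut.conj x⁻¹ • A : Subgroup G) : Set G) * (B : Set G) = Set.univ ∧
    (A : Set G) * ((MulAut.conj x⁻¹ • A : Subgroup G) : Set G) ≠ Set.univ :=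
  ⟨Subgroup.conj_smul_mul_eq_univ hAB x⁻¹,
    fun h => hA (Subgroup.eq_top_of_mul_conj_smul_eq_univ h)⟩

/-- If `A`, `B` are proper subgroups of a finite group `G`
with `G = AB`, then for every `x ∈ G` we have `A^x B = G` and `G ≠ A A^x`. -/
theorem conj_factorization
    (G : Type*) [Group G] [Finite G] (A B : Subgroup G)
    (hA : A ≠ ⊤) (hB : B ≠ ⊤)
    (hAB : (A : Set G) * (B : Set G) = Set.univ) (x : G) :
    ((MulAut.conj x⁻¹ • A : Subgroup G) : Set G) * (B : Set G) = Set.univ ∧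
    (A : Set G) * ((MulAut.conj x⁻¹ • A : Subgroup G) : Set G) ≠ Set.univ :=
  conj_factorization_general G A B hA hAB x
end

section
/- If a finite group G has three soluble subgroups A₁, A₂, A₃ whose indices |G:A₁|, |G:A₂|, |G:A₃| are pairwise coprime, then G is soluble. -/
/-!
Induction on `|G|`. If `A₁ = 1` then `A₂ = G`; otherwise, being soluble, `A₁` normalises a
nontrivial `p`-subgroup `N` of `G` (a Sylow subgroup of the last nontrivial term of its derived
series). As `p` divides at most one of `|G:A₂|`, `|G:A₃|`, there is `B ∈ {A₂, A₃}` with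
`p ∤ |G:B|`, so `B` contains a Sylow `p`-subgroup of `G` and hence a conjugate of `N`.
Coprimality of `|G:A₁|` and `|G:B|` gives `G = A₁B`, and as `A₁` normalises `N`, every conjugate
of `N` lies in `B`. So the normal core of `B` is a nontrivial soluble normal subgroup `K`, and the
images of the `Aᵢ` in `G/K` satisfy the hypotheses again.
-/

open Subgroup

section

variable {G : Type*} [Group G]

theorem Subgroup.relIndex_eq_index_of_coprime_index {A B : Subgroup G} [B.FiniteIndex]
    (h : A.index.Coprime B.index) : B.relIndex A = B.index := by
  have : B.IsFiniteRelIndex A := isFiniteRelIndex_of_finiteIndex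
  have hdvd : B.index ∣ B.relIndex A * A.index := by
    rw [← inf_relIndex_left, relIndex_mul_index inf_le_left]
    exact index_dvd_of_le inf_le_right
  have hle : B.relIndex A ≤ B.relIndex ⊤ := relIndex_le_of_le_right le_top
    (isFiniteRelIndex_top_iff.mpr ‹_›).relIndex_ne_zero
  rw [relIndex_top_right] at hle
  exact le_antisymm hle <| Nat.le_of_dvd (Nat.pos_of_ne_zero relIndex_ne_zero)
    (h.symm.dvd_of_dvd_mul_right hdvd)

theorem Subgroup.exists_mul_eq_of_relIndex_eq_index {A B : Subgroup G} [B.FiniteIndex]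
    (h : B.relIndex A = B.index) (g : G) : ∃ a ∈ A, ∃ b ∈ B, a * b = g := by
  have : B.IsFiniteRelIndex A := isFiniteRelIndex_of_finiteIndex
  let f := quotientSubgroupOfEmbeddingOfLE B (le_top : A ≤ ⊤)
  have hf : Function.Surjective f := (f.injective.bijective_of_nat_card_le <| by
    change B.relIndex ⊤ ≤ B.relIndex A
    rw [h, relIndex_top_right]).2
  obtain ⟨x, hx⟩ := hf (⟨g, mem_top g⟩ : (⊤ : Subgroup G))
  induction x using QuotientGroup.induction_on with | H a
  rw [quotientSubgroupOfEmbeddingOfLE_apply_mk, QuotientGroup.eq, mem_subgroupOf] at hx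
  exact ⟨a, a.2, _, hx, mul_inv_cancel_left _ _⟩

theorem IsPGroup.exists_conj_mem_of_not_dvd_index [Finite G] {p : ℕ} [Fact p.Prime]
    {N B : Subgroup G} (hN : IsPGroup p N) (hB : ¬ p ∣ B.index) :
    ∃ g : G, ∀ x ∈ N, g * x * g⁻¹ ∈ B := by
  obtain ⟨R⟩ : Nonempty (Sylow p B) := inferInstance
  have hR : ¬ p ∣ (R.map B.subtype).index := by
    rw [index_map_subtype]
    exact Nat.Prime.not_dvd_mul Fact.out R.not_dvd_index hB
  obtain ⟨Q, hNQ⟩ := hN.exists_le_sylow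
  obtain ⟨g, hg⟩ := MulAction.exists_smul_eq G Q ((R.2.map B.subtype).toSylow hR)
  refine ⟨g, fun x hx ↦ map_subtype_le (R : Subgroup B) ?_⟩
  rw [← (R.2.map B.subtype).toSylow_coe hR, ← hg]
  exact smul_mem_pointwise_smul x (MulAut.conj g) (Q : Subgroup G) (hNQ hx)

/- Writing `c⁻¹ = a * b`, conjugation by `c` is conjugation by `a⁻¹`, which preserves `N`,
followed by conjugation by `b⁻¹`, which preserves `B`. -/
theorem Subgroup.le_normalCore_of_conj_mem {A B N : Subgroup G}
    (hAB : ∀ g, ∃ a ∈ A, ∃ b ∈ B, a * b = g) (hA : A ≤ normalizer (N : Set G)) {g : G}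
    (hg : ∀ x ∈ N, g * x * g⁻¹ ∈ B) : N ≤ B.normalCore := by
  have hNB : N ≤ B := by
    intro y hy
    obtain ⟨a, ha, b, hb, hab⟩ := hAB g⁻¹
    have h := hg (a * y * a⁻¹) ((mem_normalizer_iff.mp (hA ha) y).mp hy)
    rw [← inv_inv g, ← hab] at h
    convert B.mul_mem (B.mul_mem hb h) (B.inv_mem hb) using 1
    group
  intro y hy c
  obtain ⟨a, ha, b, hb, hab⟩ := hAB c⁻¹
  have h := hNB ((mem_normalizer_iff''.mp (hA ha) y).mp hy)
  rw [← inv_inv c, ← hab]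
  convert B.mul_mem (B.mul_mem (B.inv_mem hb) h) hb using 1
  group

theorem Subgroup.normalCore_ne_bot_of_isPGroup [Finite G] {p : ℕ} [Fact p.Prime]
    {A B N : Subgroup G} (hAB : A.index.Coprime B.index) (hN : IsPGroup p N) (hN_ne : N ≠ ⊥)
    (hA : A ≤ normalizer (N : Set G)) (hB : ¬ p ∣ B.index) : B.normalCore ≠ ⊥ := by
  obtain ⟨g, hg⟩ := hN.exists_conj_mem_of_not_dvd_index hB
  have hAB' := exists_mul_eq_of_relIndex_eq_index (relIndex_eq_index_of_coprime_index hAB)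
  exact ne_bot_of_le_ne_bot hN_ne (le_normalCore_of_conj_mem hAB' hA hg)

theorem exists_derivedSeries_ne_bot_isMulCommutative [Group.IsSolvable G] [Nontrivial G] :
    ∃ n, derivedSeries G n ≠ ⊥ ∧ IsMulCommutative (derivedSeries G n) := by
  classical
  have hsol : ∃ n, derivedSeries G n = ⊥ := Group.IsSolvable.solvable
  obtain ⟨m, hm⟩ : ∃ m, Nat.find hsol = m + 1 :=
    Nat.exists_eq_succ_of_ne_zero fun h ↦ top_ne_bot (h ▸ Nat.find_spec hsol)
  refine ⟨m, Nat.find_min hsol (by omega), ?_⟩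
  rw [← commutator_self_eq_bot_iff, ← derivedSeries_succ, ← hm]
  exact Nat.find_spec hsol

theorem exists_normal_isPGroup_ne_bot [Finite G] [Group.IsSolvable G] [Nontrivial G] :
    ∃ p, p.Prime ∧ ∃ N : Subgroup G, N.Normal ∧ IsPGroup p N ∧ N ≠ ⊥ := by
  obtain ⟨n, hD, hDcomm⟩ := exists_derivedSeries_ne_bot_isMulCommutative (G := G)
  set D := derivedSeries G n
  have : Nontrivial D := (nontrivial_iff_ne_bot D).mpr hD
  set p := (Nat.card D).minFac
  have : Fact p.Prime := ⟨Nat.minFac_prime Finite.one_lt_card.ne'⟩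
  obtain ⟨P⟩ : Nonempty (Sylow p D) := inferInstance
  have : (P : Subgroup D).Characteristic := P.characteristic_of_normal inferInstance
  refine ⟨p, Fact.out, P.map D.subtype, inferInstance, P.2.map _, ?_⟩
  rw [Ne, map_eq_bot_iff_of_injective _ D.subtype_injective]
  exact P.ne_bot_of_dvd_card (Nat.card D).minFac_dvd

theorem Subgroup.exists_isPGroup_ne_bot_le_normalizer [Finite G] {A : Subgroup G}
    [Group.IsSolvable A] (hA : A ≠ ⊥) :
    ∃ p, p.Prime ∧ ∃ N : Subgroup G, IsPGroup p N ∧ N ≠ ⊥ ∧ A ≤ normalizer (N : Set G) := by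
  have : Nontrivial A := (nontrivial_iff_ne_bot A).mpr hA
  obtain ⟨p, hp, N, hN, hNp, hN_ne⟩ := exists_normal_isPGroup_ne_bot (G := A)
  refine ⟨p, hp, N.map A.subtype, hNp.map _, ?_, ?_⟩
  · rwa [Ne, map_eq_bot_iff_of_injective _ A.subtype_injective]
  · calc A = (normalizer (N : Set A)).map A.subtype := by
          rw [normalizer_eq_top, ← MonoidHom.range_eq_map, range_subtype]
      _ ≤ _ := le_normalizer_map _

theorem exists_normal_ne_bot_isSolvable_of_coprime_index [Finite G] {A₁ A₂ A₃ : Subgroup G}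
    [Group.IsSolvable A₁] [Group.IsSolvable A₂] [Group.IsSolvable A₃] (hA₁ : A₁ ≠ ⊥)
    (h₁₂ : A₁.index.Coprime A₂.index) (h₁₃ : A₁.index.Coprime A₃.index)
    (h₂₃ : A₂.index.Coprime A₃.index) :
    ∃ K : Subgroup G, K.Normal ∧ K ≠ ⊥ ∧ Group.IsSolvable K := by
  obtain ⟨p, hp, N, hNp, hN, hA₁N⟩ := exists_isPGroup_ne_bot_le_normalizer hA₁
  have : Fact p.Prime := ⟨hp⟩
  obtain ⟨B, hB, h₁B, hpB⟩ : ∃ B : Subgroup G,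
      Group.IsSolvable B ∧ A₁.index.Coprime B.index ∧ ¬ p ∣ B.index := by
    by_cases hp₂ : p ∣ A₂.index
    · exact ⟨A₃, inferInstance, h₁₃, fun hp₃ ↦ hp.ne_one (Nat.eq_one_of_dvd_coprimes h₂₃ hp₂ hp₃)⟩
    · exact ⟨A₂, inferInstance, h₁₂, hp₂⟩
  exact ⟨B.normalCore, inferInstance, normalCore_ne_bot_of_isPGroup h₁B hNp hN hA₁N hpB,
    Group.isSolvable_of_isSolvable_injective (inclusion_injective B.normalCore_le)⟩

instance Subgroup.isSolvable_map {G' : Type*} [Group G'] (A : Subgroup G) [Group.IsSolvable A]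
    (f : G →* G') : Group.IsSolvable (A.map f) :=
  Group.isSolvable_of_surjective (f.subgroupMap_surjective A)

theorem Subgroup.coprime_index_map {G' : Type*} [Group G'] {A B : Subgroup G} {f : G →* G'}
    (hf : Function.Surjective f) (h : A.index.Coprime B.index) :
    (A.map f).index.Coprime (B.map f).index :=
  (h.coprime_dvd_left (A.index_map_dvd hf)).coprime_dvd_right (B.index_map_dvd hf)

theorem Subgroup.card_quotient_lt [Finite G] {K : Subgroup G} (hK : K ≠ ⊥) :
    Nat.card (G ⧸ K) < Nat.card G := by
  have : Nontrivial K := (nontrivial_iff_ne_bot K).mpr hK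
  calc Nat.card (G ⧸ K) = K.index := rfl
    _ < K.index * Nat.card K :=
      lt_mul_of_one_lt_right (Nat.pos_of_ne_zero K.index_ne_zero_of_finite) Finite.one_lt_card
    _ = Nat.card G := K.index_mul_card

end

/-- Wielandt: If a finite group `G` has three soluble subgroups
whose indices are pairwise coprime, then `G` is soluble. -/
theorem solvable_of_three_solvable_coprime_indices
    (G : Type*) [Group G] [Finite G] (A₁ A₂ A₃ : Subgroup G)
    (h₁ : IsSolvable A₁) (h₂ : IsSolvable A₂) (h₃ : IsSolvable A₃)
    (h₁₂ : Nat.Coprime A₁.index A₂.index)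
    (h₁₃ : Nat.Coprime A₁.index A₃.index)
    (h₂₃ : Nat.Coprime A₂.index A₃.index) :
    IsSolvable G := by
  replace h₁ : Group.IsSolvable A₁ := h₁
  replace h₂ : Group.IsSolvable A₂ := h₂
  replace h₃ : Group.IsSolvable A₃ := h₃
  induction hn : Nat.card G using Nat.strong_induction_on generalizing G with
  | _ n ih =>
  rcases eq_or_ne A₁ ⊥ with rfl | hA₁
  · obtain rfl : A₂ = ⊤ := index_eq_one.mp (h₁₂.symm.eq_one_of_dvd (index_dvd_of_le bot_le))
    exact Group.isSolvable_of_surjective (MonoidHom.range_eq_top.mp (range_subtype ⊤))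
  obtain ⟨K, hK, hK_ne, hK_sol⟩ := exists_normal_ne_bot_isSolvable_of_coprime_index hA₁ h₁₂ h₁₃ h₂₃
  have hf := QuotientGroup.mk'_surjective K
  have : Group.IsSolvable (G ⧸ K) := ih _ (hn ▸ card_quotient_lt hK_ne) (G ⧸ K) _ _ _
    (coprime_index_map hf h₁₂) (coprime_index_map hf h₁₃) (coprime_index_map hf h₂₃)
    inferInstance inferInstance inferInstance rfl
  exact (Group.isSolvable_iff_subgroup_quotient K).mpr ⟨hK_sol, this⟩
end

section
/- If a finite group G has three nilpotent subgroups A₁, A₂, A₃ whose indices |G:A₁|, |G:A₂|, |G:A₃| are pairwise coprime, then G is nilpotent. -/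
/-!
If a nilpotent subgroup `A` has index prime to `p`, it contains a Sylow
`p`-subgroup `P` of `G`, which is then the (normal) Sylow `p`-subgroup of `A`; so `A` normalizes
`P` and the number `|G : N_G(P)|` of Sylow `p`-subgroups divides `|G : A|`. A prime divides at
most one of three pairwise coprime indices, so the number of Sylow `p`-subgroups divides two
coprime numbers and equals `1`. Hence every Sylow subgroup of `G` is normal.
-/

open Subgroup

theorem Nat.Coprime.not_dvd_right_of_dvd_left {a b p : ℕ} (hp : p.Prime) (hab : a.Coprime b)
    (hpa : p ∣ a) : ¬ p ∣ b :=
  (Nat.Prime.coprime_iff_not_dvd hp).mp (hab.coprime_dvd_left hpa)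

section

variable {G : Type*} [Group G] [Finite G] {p : ℕ} [Fact p.Prime]

theorem Sylow.exists_le_of_not_dvd_index {H : Subgroup G} (hpH : ¬ p ∣ H.index) :
    ∃ P : Sylow p G, (P : Subgroup G) ≤ H := by
  obtain ⟨Q⟩ : Nonempty (Sylow p H) := inferInstance
  have hpQ : ¬ p ∣ (Q.map H.subtype).index := by
    rw [index_map_subtype]
    exact Nat.Prime.not_dvd_mul Fact.out Q.not_dvd_index hpH
  exact ⟨(Q.2.map H.subtype).toSylow hpQ, map_subtype_le _⟩

theorem Sylow.card_dvd_index_of_isNilpotent {A : Subgroup G} (hA : Group.IsNilpotent A)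
    (hpA : ¬ p ∣ A.index) : Nat.card (Sylow p G) ∣ A.index := by
  obtain ⟨P, hPA⟩ := Sylow.exists_le_of_not_dvd_index hpA
  have : ((P : Subgroup G).subgroupOf A).Normal := by
    have := hA
    exact inferInstanceAs (P.subtype hPA : Subgroup A).Normal
  rw [P.card_eq_index_normalizer]
  exact index_dvd_of_le (le_normalizer_of_normal_subgroupOf hPA)

theorem Sylow.normal_of_isNilpotent_of_coprime_index {A B : Subgroup G}
    (hA : Group.IsNilpotent A) (hB : Group.IsNilpotent B) (hAB : A.index.Coprime B.index)
    (hpA : ¬ p ∣ A.index) (hpB : ¬ p ∣ B.index) (P : Sylow p G) : (P : Subgroup G).Normal := by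
  have hcard : Nat.card (Sylow p G) = 1 := Nat.eq_one_of_dvd_coprimes hAB
    (card_dvd_index_of_isNilpotent hA hpA) (card_dvd_index_of_isNilpotent hB hpB)
  have : Subsingleton (Sylow p G) := (Nat.card_eq_one_iff_unique.mp hcard).1
  exact P.normal_of_subsingleton

end

/-- Kegel: If a finite group `G` has three nilpotent subgroups
whose indices are pairwise coprime, then `G` is nilpotent. -/
theorem nilpotent_of_three_nilpotent_coprime_indices
    (G : Type*) [Group G] [Finite G] (A₁ A₂ A₃ : Subgroup G)
    (h₁ : Group.IsNilpotent A₁) (h₂ : Group.IsNilpotent A₂)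
    (h₃ : Group.IsNilpotent A₃)
    (h₁₂ : Nat.Coprime A₁.index A₂.index)
    (h₁₃ : Nat.Coprime A₁.index A₃.index)
    (h₂₃ : Nat.Coprime A₂.index A₃.index) :
    Group.IsNilpotent G := by
  refine (Group.isNilpotent_of_finite_tfae.out 3 0).mp ?_
  intro p hp P
  by_cases hp₁ : p ∣ A₁.index
  · exact Sylow.normal_of_isNilpotent_of_coprime_index h₂ h₃ h₂₃
      (h₁₂.not_dvd_right_of_dvd_left hp.out hp₁) (h₁₃.not_dvd_right_of_dvd_left hp.out hp₁) P
  by_cases hp₂ : p ∣ A₂.index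
  · exact Sylow.normal_of_isNilpotent_of_coprime_index h₁ h₃ h₁₃ hp₁
      (h₂₃.not_dvd_right_of_dvd_left hp.out hp₂) P
  exact Sylow.normal_of_isNilpotent_of_coprime_index h₁ h₂ h₁₂ hp₁ hp₂ P
end

section
/- If a finite group G has three abelian subgroups A₁, A₂, A₃ whose indices |G:A₁|, |G:A₂|, |G:A₃| are pairwise coprime, then G is abelian. -/
/-!
Two abelian subgroups `A`, `B` of coprime index generate `G`, since `|G : A ⊔ B|` divides both
indices; hence `A ⊓ B`, which commutes with `A` and with `B`, is central, and
`|G : Z(G)|` divides `|G : A ⊓ B| = |G : A| |G : B|`. For three pairwise coprime indices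
`a, b, c` the only common divisor of `ab`, `ac`, `bc` is `1`, so `Z(G) = G`.
-/

theorem Nat.eq_one_of_dvd_mul_of_pairwise_coprime {n a b c : ℕ}
    (hab : a.Coprime b) (hac : a.Coprime c) (hbc : b.Coprime c)
    (h_ab : n ∣ a * b) (h_ac : n ∣ a * c) (h_bc : n ∣ b * c) : n = 1 := by
  have h_a : n ∣ a := by
    simpa [Nat.gcd_mul_left, hbc.gcd_eq_one] using Nat.dvd_gcd h_ab h_ac
  exact Nat.eq_one_of_dvd_coprimes (hab.mul_right hac) h_a h_bc

namespace Subgroup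

variable {G : Type*} [Group G] {H K : Subgroup G}

theorem sup_eq_top_of_coprime_index (h : H.index.Coprime K.index) : H ⊔ K = ⊤ :=
  index_eq_one.mp <|
    Nat.eq_one_of_dvd_coprimes h (index_dvd_of_le le_sup_left) (index_dvd_of_le le_sup_right)

theorem index_inf_eq_mul_of_coprime (h : H.index.Coprime K.index) :
    (H ⊓ K).index = H.index * K.index := by
  rcases eq_or_ne (H ⊓ K).index 0 with h0 | h0
  · rw [h0, eq_comm]
    by_contra hne
    exact index_inf_ne_zero (left_ne_zero_of_mul hne) (right_ne_zero_of_mul hne) h0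
  · exact le_antisymm index_inf_le <| Nat.le_of_dvd (Nat.pos_of_ne_zero h0) <|
      h.mul_dvd_of_dvd_of_dvd (index_dvd_of_le inf_le_left) (index_dvd_of_le inf_le_right)

theorem inf_le_center_of_sup_eq_top [IsMulCommutative H] [IsMulCommutative K]
    (h : H ⊔ K = ⊤) : H ⊓ K ≤ center G := by
  have hH : H ≤ centralizer (H ⊓ K : Subgroup G) :=
    le_centralizer_iff.mp (inf_le_left.trans (le_centralizer H))
  have hK : K ≤ centralizer (H ⊓ K : Subgroup G) :=
    le_centralizer_iff.mp (inf_le_right.trans (le_centralizer K))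
  rw [← centralizer_univ, ← coe_top, ← h]
  exact le_centralizer_iff.mp (sup_le hH hK)

theorem index_center_dvd_mul_of_coprime [IsMulCommutative H] [IsMulCommutative K]
    (h : H.index.Coprime K.index) : (center G).index ∣ H.index * K.index :=
  index_inf_eq_mul_of_coprime h ▸
    index_dvd_of_le (inf_le_center_of_sup_eq_top (sup_eq_top_of_coprime_index h))

end Subgroup

theorem abelian_of_three_abelian_coprime_indices_general
    (G : Type*) [Group G] (A₁ A₂ A₃ : Subgroup G)
    (h₁ : IsMulCommutative A₁) (h₂ : IsMulCommutative A₂) (h₃ : IsMulCommutative A₃)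
    (h₁₂ : Nat.Coprime A₁.index A₂.index)
    (h₁₃ : Nat.Coprime A₁.index A₃.index)
    (h₂₃ : Nat.Coprime A₂.index A₃.index) :
    ∀ x y : G, x * y = y * x := by
  have h_center : Subgroup.center G = ⊤ :=
    Subgroup.index_eq_one.mp <| Nat.eq_one_of_dvd_mul_of_pairwise_coprime h₁₂ h₁₃ h₂₃
      (Subgroup.index_center_dvd_mul_of_coprime h₁₂)
      (Subgroup.index_center_dvd_mul_of_coprime h₁₃)
      (Subgroup.index_center_dvd_mul_of_coprime h₂₃)
  intro x y
  exact Subgroup.mem_center_iff.mp (h_center ▸ Subgroup.mem_top y) x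

/-- Doerk: If a finite group `G` has three abelian subgroups
whose indices are pairwise coprime, then `G` is abelian. -/
theorem abelian_of_three_abelian_coprime_indices
    (G : Type*) [Group G] [Finite G] (A₁ A₂ A₃ : Subgroup G)
    (h₁ : IsMulCommutative A₁) (h₂ : IsMulCommutative A₂) (h₃ : IsMulCommutative A₃)
    (h₁₂ : Nat.Coprime A₁.index A₂.index)
    (h₁₃ : Nat.Coprime A₁.index A₃.index)
    (h₂₃ : Nat.Coprime A₂.index A₃.index) :
    ∀ x y : G, x * y = y * x :=
  abelian_of_three_abelian_coprime_indices_general G A₁ A₂ A₃ h₁ h₂ h₃ h₁₂ h₁₃ h₂₃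
end

section
/- Let G be a finite group and I the intersection of all maximal nilpotent subgroups of G (i.e., subgroups maximal among nilpotent subgroups). If H ≤ G is nilpotent, then the subgroup generated by I and H is nilpotent. -/
/-- `U` is a maximal nilpotent subgroup of its ambient group. -/
def IsMaxNilpotentSubgroup {H : Type*} [Group H] (U : Subgroup H) : Prop :=
  Group.IsNilpotent U ∧ ∀ V : Subgroup H, Group.IsNilpotent V → U ≤ V → U = V

/-- The intersection of all maximal nilpotent subgroups of a group. -/
def intNilp (H : Type*) [Group H] : Subgroup H :=
  sInf {U : Subgroup H | IsMaxNilpotentSubgroup U}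

theorem Subgroup.isNilpotent_of_le {G : Type*} [Group G] {K U : Subgroup G} (hKU : K ≤ U)
    [Group.IsNilpotent U] : Group.IsNilpotent K :=
  Group.nilpotent_of_mulEquiv (Subgroup.subgroupOfEquivOfLe hKU)

theorem intNilp_le {G : Type*} [Group G] {U : Subgroup G} (hU : IsMaxNilpotentSubgroup U) :
    intNilp G ≤ U :=
  sInf_le hU

theorem exists_isMaxNilpotentSubgroup_le {G : Type*} [Group G] [Finite G] {H : Subgroup G}
    (hH : Group.IsNilpotent H) : ∃ U, IsMaxNilpotentSubgroup U ∧ H ≤ U := by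
  obtain ⟨U, ⟨hU, hHU⟩, hmax⟩ :=
    Set.Finite.exists_maximalFor id {V : Subgroup G | Group.IsNilpotent V ∧ H ≤ V}
      (Set.toFinite _) ⟨H, hH, le_rfl⟩
  exact ⟨U, ⟨hU, fun V hV hUV => le_antisymm hUV (hmax ⟨hV, hHU.trans hUV⟩ hUV)⟩, hHU⟩

/-- If `I` is the intersection of all maximal nilpotent
subgroups of a finite group `G` and `H ≤ G` is nilpotent, then `⟨I, H⟩`
is nilpotent. -/
theorem intNilp_sup_nilpotent
    (G : Type*) [Group G] [Finite G] (H : Subgroup G)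
    (hH : Group.IsNilpotent H) :
    Group.IsNilpotent (intNilp G ⊔ H : Subgroup G) := by
  obtain ⟨U, hU, hHU⟩ := exists_isMaxNilpotentSubgroup_le hH
  have : Group.IsNilpotent U := hU.1
  exact Subgroup.isNilpotent_of_le (sup_le (intNilp_le hU) hHU)
end

section
/- Let G be a finite group and I the intersection of all maximal nilpotent subgroups of G. If H ≤ G and H/(H ∩ I) is nilpotent, then H is nilpotent. -/
/-!
Write `K` for `H ∩ I` inside `H`. Every maximal nilpotent subgroup `U` of `H` is `H ∩ V` for a
maximal nilpotent subgroup `V ⊇ U` of `G`, so `K` lies in all maximal nilpotent subgroups of `H`.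
It then suffices to show: if a normal subgroup `K` of a finite group `X` lies in every maximal
nilpotent subgroup and `X / K` is nilpotent, then `X` is nilpotent. We induct on `|X|`.

If `K ≠ 1`, take a prime `p ∣ |K|` and the Sylow `p`-subgroup `P` of the nilpotent group `K`;
it is characteristic in `K`, hence normal in `X`, so a Sylow `p`-subgroup `R` of `X` fixes some
`b ≠ 1` of `P` under conjugation. A `q`-subgroup `Q` (`q ≠ p`) is nilpotent, hence lies in a
maximal nilpotent subgroup, which also contains `P`; there `P` and `Q` commute. So the
centraliser of `b` contains a Sylow subgroup for every prime, and `b` is central. Pass to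
`X / Z(X)`: preimages of nilpotent subgroups under a central quotient are nilpotent, so the image
of `K` again lies in every maximal nilpotent subgroup.
-/

open Group Subgroup

section

variable {G : Type*} [Group G]

theorem Subgroup.isNilpotent_of_le_s11 {H K : Subgroup G} (hHK : H ≤ K) [IsNilpotent K] :
    IsNilpotent H :=
  Group.nilpotent_of_mulEquiv (subgroupOfEquivOfLe hHK)

theorem Subgroup.isNilpotent_comap_of_ker_le_center {G' : Type*} [Group G'] (f : G →* G')
    (hf : f.ker ≤ center G) (V : Subgroup G') [IsNilpotent V] : IsNilpotent (V.comap f) :=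
  isNilpotent_of_ker_le_center ((f.comp (V.comap f).subtype).codRestrict V fun x => x.2)
    fun _ hx => mem_center_iff.mpr fun y =>
      Subtype.ext (mem_center_iff.mp (hf (congrArg Subtype.val hx)) y)

theorem IsPGroup.exists_ne_one_commute_of_dvd_card {p : ℕ} [Fact p.Prime] {R N : Subgroup G}
    [N.Normal] [Finite N] (hR : IsPGroup p R) (hpN : p ∣ Nat.card N) :
    ∃ b ∈ N, b ≠ 1 ∧ ∀ r ∈ R, Commute r b := by
  obtain ⟨b, hb, hb1⟩ := IsPGroup.exists_fixed_point_of_prime_dvd_card_of_fixed_point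
    (hR.map ConjAct.toConjAct.toMonoidHom) (α := N) hpN (a := 1) fun g => smul_one g
  refine ⟨b, b.2, fun h => hb1 (Subtype.ext h.symm), fun r hr => ?_⟩
  have hfix : ConjAct.toConjAct r • (b : G) = b :=
    congrArg Subtype.val (hb ⟨ConjAct.toConjAct r, r, hr, rfl⟩)
  rwa [ConjAct.smul_def, ConjAct.ofConjAct_toConjAct, mul_inv_eq_iff_eq_mul] at hfix

theorem IsMaxNilpotentSubgroup.intNilp_le {V : Subgroup G} (hV : IsMaxNilpotentSubgroup V) :
    intNilp G ≤ V :=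
  sInf_le hV

variable [Finite G]

theorem Subgroup.eq_top_of_forall_exists_sylow_le (H : Subgroup G)
    (h : ∀ (p : ℕ) [Fact p.Prime], ∃ P : Sylow p G, ↑P ≤ H) : H = ⊤ := by
  rw [← index_eq_one]
  by_contra hne
  have : Fact H.index.minFac.Prime := ⟨Nat.minFac_prime hne⟩
  obtain ⟨P, hPH⟩ := h H.index.minFac
  exact P.not_dvd_index ((Nat.minFac_dvd _).trans (index_dvd_of_le hPH))

theorem commute_of_isPGroup_of_ne [IsNilpotent G] {p q : ℕ} [Fact p.Prime] [Fact q.Prime]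
    (hpq : p ≠ q) {P Q : Subgroup G} (hP : IsPGroup p P) (hQ : IsPGroup q Q)
    {x y : G} (hx : x ∈ P) (hy : y ∈ Q) : Commute x y := by
  obtain ⟨S, hPS⟩ := hP.exists_le_sylow
  obtain ⟨T, hQT⟩ := hQ.exists_le_sylow
  exact commute_of_normal_of_disjoint _ _ inferInstance inferInstance
    (IsPGroup.disjoint_of_ne p q hpq _ _ S.isPGroup' T.isPGroup') x y (hPS hx) (hQT hy)

theorem exists_le_isMaxNilpotentSubgroup {U : Subgroup G} (hU : IsNilpotent U) :
    ∃ V, IsMaxNilpotentSubgroup V ∧ U ≤ V := by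
  have : Finite (Subgroup G) := Finite.of_injective _ SetLike.coe_injective
  obtain ⟨V, ⟨hV, hUV⟩, hmax⟩ := Set.Finite.exists_maximalFor id
    {V : Subgroup G | IsNilpotent V ∧ U ≤ V} (Set.toFinite _) ⟨U, hU, le_rfl⟩
  exact ⟨V, ⟨hV, fun W hW hVW => le_antisymm hVW (hmax ⟨hW, hUV.trans hVW⟩ hVW)⟩, hUV⟩

theorem isNilpotent_of_le_intNilp {K : Subgroup G} (hK : K ≤ intNilp G) :
    IsNilpotent K := by
  obtain ⟨V, hV, -⟩ := exists_le_isMaxNilpotentSubgroup (U := (⊥ : Subgroup G)) inferInstance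
  have := hV.1
  exact isNilpotent_of_le_s11 (hK.trans hV.intNilp_le)

theorem commute_of_le_intNilp {p q : ℕ} [Fact p.Prime] [Fact q.Prime] (hpq : p ≠ q)
    {P Q : Subgroup G} (hP : IsPGroup p P) (hPI : P ≤ intNilp G) (hQ : IsPGroup q Q)
    {x y : G} (hx : x ∈ P) (hy : y ∈ Q) : Commute x y := by
  obtain ⟨V, hV, hQV⟩ := exists_le_isMaxNilpotentSubgroup hQ.isNilpotent
  have := hV.1
  exact (commute_of_isPGroup_of_ne hpq (hP.comap_subtype (K := V)) (hQ.comap_subtype (K := V))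
    (x := ⟨x, hV.intNilp_le (hPI hx)⟩) (y := ⟨y, hQV hy⟩) hx hy).map V.subtype

theorem inf_center_ne_bot_of_le_intNilp {K : Subgroup G} [K.Normal] (hK : K ≤ intNilp G)
    (hKbot : K ≠ ⊥) : K ⊓ center G ≠ ⊥ := by
  have := isNilpotent_of_le_intNilp hK
  obtain ⟨p, hp, hpK⟩ := Nat.exists_prime_and_dvd ((one_lt_card_iff_ne_bot K).mpr hKbot).ne'
  have := Fact.mk hp
  obtain ⟨S⟩ : Nonempty (Sylow p K) := inferInstance
  have := Sylow.characteristic_of_normal S inferInstance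
  set P : Subgroup G := (S : Subgroup K).map K.subtype
  have hPK : P ≤ K := map_subtype_le _
  have hpP : p ∣ Nat.card P := by
    rw [card_map_of_injective K.subtype_injective]
    exact S.dvd_card_of_dvd_card hpK
  obtain ⟨R⟩ : Nonempty (Sylow p G) := inferInstance
  obtain ⟨b, hbP, hb1, hbR⟩ := R.isPGroup'.exists_ne_one_commute_of_dvd_card hpP
  have hb : centralizer {b} = ⊤ := eq_top_of_forall_exists_sylow_le _ fun q _ => by
    obtain ⟨Q⟩ : Nonempty (Sylow q G) := inferInstance
    rcases eq_or_ne p q with rfl | hpq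
    · exact ⟨R, fun r hr => mem_centralizer_singleton_iff.mpr (hbR r hr)⟩
    · exact ⟨Q, fun y hy => mem_centralizer_singleton_iff.mpr (commute_of_le_intNilp hpq
        (S.isPGroup'.map K.subtype) (hPK.trans hK) Q.isPGroup' hbP hy).symm⟩
  have hbZ : b ∈ center G := centralizer_eq_top_iff_subset.mp hb rfl
  exact ne_bot_iff_exists_ne_one.mpr
    ⟨⟨b, hPK hbP, hbZ⟩, fun h => hb1 (congrArg Subtype.val h)⟩

theorem map_intNilp_le_intNilp {G' : Type*} [Group G'] {f : G →* G'}
    (hf : Function.Surjective f) (hker : f.ker ≤ center G) :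
    (intNilp G).map f ≤ intNilp G' := by
  refine le_sInf fun U' hU' => ?_
  have := hU'.1
  obtain ⟨U, hU, hU'U⟩ :=
    exists_le_isMaxNilpotentSubgroup (isNilpotent_comap_of_ker_le_center f hker U')
  have := hU.1
  have hU'_eq : U' = U.map f :=
    hU'.2 _ (Group.nilpotent_of_surjective _ (f.subgroupMap_surjective U))
      ((map_comap_eq_self_of_surjective hf U').ge.trans (map_mono hU'U))
  exact hU'_eq ▸ map_mono hU.intNilp_le

theorem subgroupOf_intNilp_le_intNilp (H : Subgroup G) :
    (intNilp G).subgroupOf H ≤ intNilp H := by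
  refine le_sInf fun U hU => ?_
  have := hU.1
  obtain ⟨V, hV, hUV⟩ := exists_le_isMaxNilpotentSubgroup
    (Group.nilpotent_of_mulEquiv (equivMapOfInjective U H.subtype H.subtype_injective))
  have := hV.1
  have hU_eq : U = V.subgroupOf H :=
    hU.2 _ (isNilpotent_comap_of_ker_le_center _ (by simp) V) fun u hu => hUV ⟨u, hu, rfl⟩
  exact hU_eq ▸ comap_mono hV.intNilp_le

end

theorem isNilpotent_of_quotient_of_le_intNilp {G : Type*} [Group G] [Finite G]
    (K : Subgroup G) [K.Normal] (hK : K ≤ intNilp G) (hGK : IsNilpotent (G ⧸ K)) :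
    IsNilpotent G := by
  induction hn : Nat.card G using Nat.strong_induction_on generalizing G with
  | _ n ih =>
    rcases eq_or_ne K ⊥ with rfl | hKbot
    · exact Subgroup.isNilpotent_of_ker_le_center (QuotientGroup.mk' ⊥) (by simp)
    let π := QuotientGroup.mk' (center G)
    have hπ : Function.Surjective π := QuotientGroup.mk'_surjective _
    have hZ : center G ≠ ⊥ :=
      ne_bot_of_le_ne_bot (inf_center_ne_bot_of_le_intNilp hK hKbot) inf_le_right
    have hcard : Nat.card (G ⧸ center G) < n := by
      rw [← hn, ← (center G).card_mul_index, index_eq_card]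
      exact lt_mul_of_one_lt_left Nat.card_pos ((one_lt_card_iff_ne_bot _).mpr hZ)
    have : (K.map π).Normal := ‹K.Normal›.map π hπ
    have hKπ : K.map π ≤ intNilp (G ⧸ center G) :=
      (map_mono hK).trans (map_intNilp_le_intNilp hπ (QuotientGroup.ker_mk' _).le)
    have hGKπ : IsNilpotent ((G ⧸ center G) ⧸ K.map π) :=
      Group.nilpotent_of_surjective _ (QuotientGroup.map_surjective_of_surjective K (K.map π) π
        ((QuotientGroup.mk'_surjective _).comp hπ) (le_comap_map π K))
    exact Group.of_quotient_center_nilpotent (ih _ hcard (K.map π) hKπ hGKπ rfl)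

/-- If `I` is the intersection of all maximal nilpotent
subgroups of a finite group `G`, `H ≤ G`, and `H/(H ∩ I)` is nilpotent,
then `H` is nilpotent.  (The normality of `(H ⊓ I)` in `H` is automatic
since `I = Z_∞(G)` is normal in `G`; it is recorded as an instance
assumption so that the quotient group makes sense.) -/
theorem nilpotent_of_quotient_by_intNilp
    (G : Type*) [Group G] [Finite G] (H : Subgroup G)
    [hn : ((H ⊓ intNilp G).subgroupOf H).Normal]
    (hq : Group.IsNilpotent (H ⧸ (H ⊓ intNilp G).subgroupOf H)) :
    Group.IsNilpotent H := by
  refine isNilpotent_of_quotient_of_le_intNilp _ ?_ hq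
  rw [inf_subgroupOf_left]
  exact subgroupOf_intNilp_le_intNilp H
end

section
/- Let G be a finite group and H, E subgroups of G. Then Int_N(H) ∩ E ≤ Int_N(H ∩ E), where Int_N(K) denotes the intersection of all maximal nilpotent subgroups of K. -/
section

variable {K L : Type*} [Group K] [Group L]

theorem Group.isNilpotent_of_injective [Group.IsNilpotent L] {f : K →* L}
    (hf : Function.Injective f) : Group.IsNilpotent K :=
  (Group.isNilpotent_congr (MonoidHom.ofInjective hf)).mpr inferInstance

theorem Subgroup.isNilpotent_comap {U : Subgroup L} [Group.IsNilpotent U] {f : K →* L}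
    (hf : Function.Injective f) : Group.IsNilpotent (U.comap f) :=
  Group.isNilpotent_of_injective (f := f.subgroupComap U) fun _ _ h =>
    Subtype.ext (hf (congrArg Subtype.val h))

theorem Subgroup.isNilpotent_map {W : Subgroup K} [Group.IsNilpotent W] {f : K →* L}
    (hf : Function.Injective f) : Group.IsNilpotent (W.map f) :=
  (Group.isNilpotent_congr (W.equivMapOfInjective f hf)).mp inferInstance

theorem isMaxNilpotentSubgroup_iff_maximal {U : Subgroup L} :
    IsMaxNilpotentSubgroup U ↔ Maximal (fun V : Subgroup L => Group.IsNilpotent V) U :=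
  and_congr_right fun _ =>
    forall₂_congr fun _ _ => ⟨fun h hle => (h hle).ge, fun h hle => le_antisymm hle (h hle)⟩

theorem exists_isMaxNilpotentSubgroup_le_s12 [Finite L] {A : Subgroup L} (hA : Group.IsNilpotent A) :
    ∃ U, IsMaxNilpotentSubgroup U ∧ A ≤ U := by
  obtain ⟨U, hAU, hU⟩ := Finite.exists_le_maximal (p := fun V : Subgroup L => Group.IsNilpotent V) hA
  exact ⟨U, isMaxNilpotentSubgroup_iff_maximal.mpr hU, hAU⟩

theorem IsMaxNilpotentSubgroup.exists_eq_comap [Finite L] {W : Subgroup K}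
    (hW : IsMaxNilpotentSubgroup W) {f : K →* L} (hf : Function.Injective f) :
    ∃ U, IsMaxNilpotentSubgroup U ∧ W = U.comap f := by
  have := hW.1
  obtain ⟨U, hU, hWU⟩ := exists_isMaxNilpotentSubgroup_le_s12 (Subgroup.isNilpotent_map (W := W) hf)
  have := hU.1
  exact ⟨U, hU, hW.2 _ (Subgroup.isNilpotent_comap hf) (Subgroup.map_le_iff_le_comap.mp hWU)⟩

theorem comap_intNilp_le [Finite L] {f : K →* L} (hf : Function.Injective f) :
    (intNilp L).comap f ≤ intNilp K := by
  intro x hx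
  refine Subgroup.mem_sInf.mpr fun W hW => ?_
  obtain ⟨U, hU, rfl⟩ := IsMaxNilpotentSubgroup.exists_eq_comap hW hf
  exact Subgroup.mem_sInf.mp hx U hU

end

/-- For subgroups `H`, `E` of a finite group `G`,
`Int_N(H) ∩ E ≤ Int_N(H ∩ E)`. -/
theorem intNilp_inf_le
    (G : Type*) [Group G] [Finite G] (H E : Subgroup G) :
    Subgroup.map H.subtype (intNilp H) ⊓ E ≤
      Subgroup.map (H ⊓ E).subtype (intNilp (H ⊓ E : Subgroup G)) := by
  rintro _ ⟨⟨y, hy, rfl⟩, hyE⟩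
  exact ⟨⟨y, y.2, hyE⟩, comap_intNilp_le (Subgroup.inclusion_injective inf_le_left) hy, rfl⟩
end

section
/- Let G be a finite group, N ⊴ G, and H ≤ G. Then Int_N(H)·N/N ≤ Int_N(HN/N), where Int_N(K) denotes the intersection of all maximal nilpotent subgroups of the finite group K. -/
open Subgroup

theorem isNilpotent_of_surjective_of_ker_le_frattini {G B : Type*} [Group G] [Group B]
    [Finite G] {f : G →* B} (hf : Function.Surjective f) (hker : f.ker ≤ frattini G)
    (hB : Group.IsNilpotent B) : Group.IsNilpotent G := by
  have : Finite B := Finite.of_surjective f hf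
  rw [Group.isNilpotent_of_finite_tfae.out 0 3 rfl rfl]
  intro p hp P
  have hPB : (map f P).Normal := by
    rw [← Sylow.coe_mapSurjective hf]
    exact (Group.isNilpotent_of_finite_tfae.out 0 3 rfl rfl).mp hB p hp _
  have hPker : ((P : Subgroup G) ⊔ f.ker).Normal := comap_map_eq f P ▸ hPB.comap f
  -- Frattini argument: `G = N_G(P) (P ker f)`, and `P ker f ≤ N_G(P) Φ(G)`.
  have hsup : normalizer (P : Subgroup G) ⊔ frattini G = ⊤ := by
    refine top_le_iff.mp ?_
    rw [← Sylow.normalizer_sup_eq_top' (N := (P : Subgroup G) ⊔ f.ker) P le_sup_left]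
    exact sup_le le_sup_left (sup_le (le_normalizer.trans le_sup_left) (hker.trans le_sup_right))
  exact normalizer_eq_top_iff.mp (frattini_nongenerating hsup)

theorem ker_le_frattini_of_forall_map_eq_top {M B : Type*} [Group M] [Group B]
    {g : M →* B} (hg : Function.Surjective g)
    (hmin : ∀ L : Subgroup M, map g L = ⊤ → L = ⊤) : g.ker ≤ frattini M := by
  refine le_iInf₂ fun L hL => ?_
  by_contra hkerL
  have hsup : L ⊔ g.ker = ⊤ := hL.2 _ (left_lt_sup.mpr hkerL)
  have : map g L = ⊤ := by
    rw [← map_comap_eq_self_of_surjective hg (map g L), comap_map_eq, hsup,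
      ← MonoidHom.range_eq_map, MonoidHom.range_eq_top_of_surjective g hg]
  exact hL.1 (hmin L this)

theorem exists_isNilpotent_map_eq_top {A B : Type*} [Group A] [Group B] [Finite A]
    {f : A →* B} (hf : Function.Surjective f) (hB : Group.IsNilpotent B) :
    ∃ M : Subgroup A, Group.IsNilpotent M ∧ map f M = ⊤ := by
  have htop : map f ⊤ = ⊤ := by
    rw [← MonoidHom.range_eq_map, MonoidHom.range_eq_top_of_surjective f hf]
  obtain ⟨M, hM, hmin⟩ := Set.Finite.exists_minimalFor id
    {M : Subgroup A | map f M = ⊤} (Set.toFinite _) ⟨⊤, htop⟩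
  refine ⟨M, ?_, hM⟩
  have hg : Function.Surjective (f.comp M.subtype) := by
    rw [← MonoidHom.range_eq_top, MonoidHom.range_comp, range_subtype]; exact hM
  refine isNilpotent_of_surjective_of_ker_le_frattini hg ?_ hB
  refine ker_le_frattini_of_forall_map_eq_top hg fun L hL => ?_
  rw [← map_map] at hL
  apply map_injective M.subtype_injective
  rw [← MonoidHom.range_eq_map, range_subtype]
  exact le_antisymm (map_subtype_le L) (hmin hL (map_subtype_le L))

theorem exists_le_isMaxNilpotentSubgroup_s13 {A : Type*} [Group A] [Finite A] {M : Subgroup A}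
    (hM : Group.IsNilpotent M) : ∃ U : Subgroup A, IsMaxNilpotentSubgroup U ∧ M ≤ U := by
  obtain ⟨U, ⟨hU, hMU⟩, hmax⟩ := Set.Finite.exists_maximalFor id
    {U : Subgroup A | Group.IsNilpotent U ∧ M ≤ U} (Set.toFinite _) ⟨M, hM, le_rfl⟩
  exact ⟨U, ⟨hU, fun V hV hUV => le_antisymm hUV (hmax ⟨hV, hMU.trans hUV⟩ hUV)⟩, hMU⟩

theorem IsMaxNilpotentSubgroup.exists_map_eq {A B : Type*} [Group A] [Group B] [Finite A]
    {f : A →* B} (hf : Function.Surjective f) {U : Subgroup B} (hU : IsMaxNilpotentSubgroup U) :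
    ∃ M : Subgroup A, IsMaxNilpotentSubgroup M ∧ map f M = U := by
  have hres : Function.Surjective (f.subgroupComap U) := fun ⟨u, hu⟩ =>
    let ⟨a, ha⟩ := hf u; ⟨⟨a, by simp [mem_comap, ha, hu]⟩, Subtype.ext ha⟩
  obtain ⟨M₀, hM₀, hM₀U⟩ := exists_isNilpotent_map_eq_top hres hU.1
  have hM₀U' : map f (map (comap f U).subtype M₀) = U := by
    rw [map_map, show f.comp (comap f U).subtype = U.subtype.comp (f.subgroupComap U) from rfl,
      ← map_map, hM₀U, ← MonoidHom.range_eq_map, range_subtype]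
  obtain ⟨M, hM, hM₀M⟩ := exists_le_isMaxNilpotentSubgroup_s13
    (Group.nilpotent_of_mulEquiv (M₀.equivMapOfInjective _ (comap f U).subtype_injective))
  have hMU : U ≤ map f M := hM₀U' ▸ map_mono hM₀M
  have := hM.1
  have hfM : Group.IsNilpotent (map f M) :=
    Group.nilpotent_of_surjective _ (f.subgroupMap_surjective M)
  exact ⟨M, hM, (hU.2 _ hfM hMU).symm⟩

theorem map_intNilp_le {A B : Type*} [Group A] [Group B] [Finite A]
    {f : A →* B} (hf : Function.Surjective f) : map f (intNilp A) ≤ intNilp B := by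
  refine le_sInf fun U hU => ?_
  obtain ⟨M, hM, rfl⟩ := hU.exists_map_eq hf
  exact map_mono (sInf_le hM)

/-- For `N ⊴ G` and `H ≤ G`,
`Int_N(H) N / N ≤ Int_N(HN/N)` in `G/N`. -/
theorem intNilp_map_quotient_le
    (G : Type*) [Group G] [Finite G] (N : Subgroup G) [N.Normal]
    (H : Subgroup G) :
    Subgroup.map (QuotientGroup.mk' N) (Subgroup.map H.subtype (intNilp H)) ≤
      Subgroup.map (Subgroup.map (QuotientGroup.mk' N) H).subtype
        (intNilp (Subgroup.map (QuotientGroup.mk' N) H)) := by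
  set π := QuotientGroup.mk' N
  have hcomm : π.comp H.subtype = (map π H).subtype.comp (π.subgroupMap H) := rfl
  rw [map_map, hcomm, ← map_map]
  exact map_mono (map_intNilp_le (π.subgroupMap_surjective H))
end

section
/- Let G be a finite group with hypercentre Z = Z_∞(G). If H is a nilpotent subgroup of G, then HZ is a nilpotent subgroup of G. Consequently Z_∞(G) is contained in every maximal nilpotent subgroup of G. -/
/-!
For finite `G` the hypercentre is a term `Z_n(G)` of the upper central series. Put `K = H Z_n(G)`.
The upper central series of `G` meets `K` inside that of `K`, so `Z_n(G) ≤ Z_n(K)`, while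
`K / Z_n(G) ≅ H / (H ∩ Z_n(G))` is nilpotent. A group that is nilpotent modulo a subgroup of
`Z_n` is nilpotent, since its lower central series then falls into `Z_n` and `n` more
commutator steps kill it. Maximality of a nilpotent `U` then forces `U = U Z_∞(G)`.
-/

/-- The hypercentre of a group: the union (supremum) of the upper central
series; for a finite group this is its last, stabilizing, term. -/
def hypercentre (G : Type*) [Group G] : Subgroup G :=
  ⨆ n : ℕ, upperCentralSeries G n

namespace Subgroup

variable {G : Type*} [Group G]

theorem subgroupOf_upperCentralSeries_le (K : Subgroup G) (n : ℕ) :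
    (upperCentralSeries G n).subgroupOf K ≤ upperCentralSeries K n := by
  induction n with
  | zero => simp
  | succ n ih => exact fun x hx y => ih (hx y)

theorem lowerCentralSeries_add_eq_bot (S : Subgroup G) {c n : ℕ}
    (h : S.lowerCentralSeries c ≤ upperCentralSeries G n) :
    S.lowerCentralSeries (c + n) = ⊥ := by
  induction n generalizing c with
  | zero => exact le_bot_iff.mp h
  | succ n ih =>
    rw [← add_assoc, add_right_comm]
    exact ih ((commutator_mono h le_top).trans (commutator_upperCentralSeries_top_le G n))

theorem isNilpotent_of_ker_le_upperCentralSeries {Q : Type*} [Group Q] [Group.IsNilpotent Q]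
    (f : G →* Q) {n : ℕ} (hf : f.ker ≤ upperCentralSeries G n) : Group.IsNilpotent G := by
  obtain ⟨c, hc⟩ := nilpotent_iff_lowerCentralSeries.mp ‹Group.IsNilpotent Q›
  refine nilpotent_iff_lowerCentralSeries.mpr ⟨c + n, lowerCentralSeries_add_eq_bot ⊤ ?_⟩
  refine le_trans ((map_eq_bot_iff _).mp ?_) hf
  rw [map_lowerCentralSeries, ← le_bot_iff, ← hc]
  exact lowerCentralSeries_mono c le_top

theorem isNilpotent_sup_upperCentralSeries (H : Subgroup G) [Group.IsNilpotent H] (n : ℕ) :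
    Group.IsNilpotent ↥(H ⊔ upperCentralSeries G n) := by
  have := Group.nilpotent_of_mulEquiv (QuotientGroup.quotientInfEquivProdNormalQuotient H
    (upperCentralSeries G n))
  exact isNilpotent_of_ker_le_upperCentralSeries (QuotientGroup.mk' _)
    ((QuotientGroup.ker_mk' _).trans_le (subgroupOf_upperCentralSeries_le _ n))

end Subgroup

theorem exists_hypercentre_eq_upperCentralSeries (G : Type*) [Group G] [Finite G] :
    ∃ n, hypercentre G = Subgroup.upperCentralSeries G n := by
  obtain ⟨n, hn⟩ := WellFoundedGT.monotone_chain_condition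
    ⟨Subgroup.upperCentralSeries G, Subgroup.upperCentralSeries_mono G⟩
  refine ⟨n, le_antisymm (iSup_le fun m => ?_) (le_iSup (Subgroup.upperCentralSeries G) n)⟩
  rcases le_total m n with h | h
  · exact Subgroup.upperCentralSeries_mono G h
  · exact (hn m h).ge

/-- If `Z = Z_∞(G)` is the hypercentre of a finite group `G`
and `H ≤ G` is nilpotent, then `HZ` is nilpotent; consequently `Z` is
contained in every maximal nilpotent subgroup of `G`. -/
theorem hypercentre_le_maximal_nilpotent
    (G : Type*) [Group G] [Finite G] :
    (∀ H : Subgroup G, Group.IsNilpotent H →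
      Group.IsNilpotent (H ⊔ hypercentre G : Subgroup G)) ∧
    (∀ U : Subgroup G, IsMaxNilpotentSubgroup U → hypercentre G ≤ U) := by
  obtain ⟨n, hn⟩ := exists_hypercentre_eq_upperCentralSeries G
  have isNilpotent_sup (H : Subgroup G) (hH : Group.IsNilpotent H) :
      Group.IsNilpotent (H ⊔ hypercentre G : Subgroup G) :=
    hn ▸ Subgroup.isNilpotent_sup_upperCentralSeries H n
  refine ⟨isNilpotent_sup, fun U hU => ?_⟩
  rw [hU.2 _ (isNilpotent_sup U hU.1) le_sup_left]
  exact le_sup_right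
end

section
/- Let G be a finite group and let E be a normal p-subgroup of G contained in the hypercentre Z_∞(G). Then G/C_G(E) is a p-group. -/
open scoped commutatorElement

section

variable {G : Type*} [Group G]

theorem commutatorElement_pow_right_of_commute {x g : G} (h : Commute ⁅x, g⁆ g) (n : ℕ) :
    ⁅x, g ^ n⁆ = ⁅x, g⁆ ^ n := by
  have hconj : x * g * x⁻¹ = ⁅x, g⁆ * g := by
    rw [commutatorElement_def]; group
  rw [commutatorElement_def, ← conj_pow, hconj, h.mul_pow, mul_inv_cancel_right]

theorem orderOf_commutatorElement_dvd_of_commute {x g : G} (h : Commute ⁅x, g⁆ g) :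
    orderOf ⁅x, g⁆ ∣ orderOf g :=
  orderOf_dvd_of_pow_eq_one <| by
    rw [← commutatorElement_pow_right_of_commute h, pow_orderOf_eq_one,
      commutatorElement_one_right]

variable {p : ℕ} {E : Subgroup G} [E.Normal]

theorem IsPGroup.commute_of_mem_upperCentralSeries (hE : IsPGroup p E) {g : G}
    (hg : p.Coprime (orderOf g)) (n : ℕ) {x : G} (hxE : x ∈ E)
    (hxn : x ∈ Subgroup.upperCentralSeries G n) : Commute x g := by
  induction n generalizing x with
  | zero =>
    rw [Subgroup.upperCentralSeries_zero, Subgroup.mem_bot] at hxn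
    exact hxn ▸ Commute.one_left g
  | succ n ih =>
    have hcE : ⁅x, g⁆ ∈ E :=
      Subgroup.commutator_le_left E ⊤ <|
        Subgroup.commutator_mem_commutator hxE (Subgroup.mem_top g)
    have hcg : Commute ⁅x, g⁆ g := ih hcE <| Subgroup.mem_upperCentralSeries_succ_iff.mp hxn g
    have hcop : (orderOf ⁅x, g⁆).Coprime (orderOf g) := by
      simpa using hE.orderOf_coprime hg ⟨_, hcE⟩
    rw [← commutatorElement_eq_one_iff_commute, ← orderOf_eq_one_iff]
    exact hcop.eq_one_of_dvd (orderOf_commutatorElement_dvd_of_commute hcg)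

theorem mem_hypercentre_iff {x : G} :
    x ∈ hypercentre G ↔ ∃ n, x ∈ Subgroup.upperCentralSeries G n :=
  Subgroup.mem_iSup_of_directed (Subgroup.upperCentralSeries_mono G).directed_le

theorem IsPGroup.mem_centralizer_of_coprime_orderOf (hE : IsPGroup p E)
    (hEZ : E ≤ hypercentre G) {g : G} (hg : p.Coprime (orderOf g)) :
    g ∈ Subgroup.centralizer (E : Set G) := fun x hxE ↦ by
  obtain ⟨n, hxn⟩ := mem_hypercentre_iff.mp (hEZ hxE)
  exact (hE.commute_of_mem_upperCentralSeries hg n hxE hxn).eq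

theorem IsPGroup.quotient_of_coprime_orderOf_mem [Finite G] [hp : Fact p.Prime]
    (N : Subgroup G) [N.Normal] (hN : ∀ g : G, p.Coprime (orderOf g) → g ∈ N) :
    IsPGroup p (G ⧸ N) := by
  refine fun q ↦ QuotientGroup.induction_on q fun g ↦ ?_
  obtain ⟨e, m, hpm, hord⟩ :=
    Nat.exists_eq_pow_mul_and_not_dvd (orderOf_pos g).ne' p hp.out.ne_one
  have hgm : orderOf (g ^ p ^ e) = m := by
    rw [orderOf_pow_of_dvd (pow_ne_zero e hp.out.ne_zero) (hord ▸ dvd_mul_right _ _), hord,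
      Nat.mul_div_cancel_left m (pow_pos hp.out.pos e)]
  refine ⟨e, ?_⟩
  rw [← QuotientGroup.mk_pow, QuotientGroup.eq_one_iff]
  exact hN _ (hgm ▸ hp.out.coprime_iff_not_dvd.mpr hpm)

end

/-- If `E` is a normal `p`-subgroup of a finite group `G` with
`E ≤ Z_∞(G)`, then `G/C_G(E)` is a `p`-group.  (The centralizer of a normal
subgroup is normal; this always-true fact is recorded as an instance
assumption so that the quotient group makes sense.) -/
theorem quotient_centralizer_isPGroup
    (G : Type*) [Group G] [Finite G] (p : ℕ) [Fact p.Prime]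
    (E : Subgroup G) [E.Normal] (hp : IsPGroup p E)
    (hE : E ≤ hypercentre G)
    [hc : (Subgroup.centralizer (E : Set G)).Normal] :
    IsPGroup p (G ⧸ Subgroup.centralizer (E : Set G)) :=
  IsPGroup.quotient_of_coprime_orderOf_mem _ fun _ ↦ hp.mem_centralizer_of_coprime_orderOf hE
end
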